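/- Let α, β, θ > 0, λ ∈ [−1,1], r ∈ ℕ, and z > 0. Then the r-th incomplete moment of the generalized transmuted Weibull distribution satisfies ∫₀^z x^r · θαβ x^{α−1} e^{−βx^α}(1 − e^{−βx^α})^{θ−1}[1 + λ − 2λ(1 − e^{−βx^α})^θ] dx = Σ_{i=0}^∞ (−1)^i [(1+λ)·C(θ−1,i) − 2λ·C(2θ−1,i)] · (θ / (β^{r/α} (i+1)^{r/α + 1})) · ∫₀^{(i+1)β z^α} t^{r/α} e^{−t} dt (the last integral being the lower incomplete gamma function γ(r/α + 1, (i+1)β z^α)). -/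

import Mathlib

/-!
Write `u = exp (-β x^α)`. Expanding `(1 - u)^(θ-1)` and `(1 - u)^(2θ-1)` by the binomial series
turns the GTW density into the signed mixture `∑ θ/(i+1) wᵢ f_{(i+1)β}` of the Weibull densities
`f_c(x) = c α x^(α-1) exp (-c x^α)`, where `wᵢ = (-1)^i [(1+λ) C(θ-1,i) - 2λ C(2θ-1,i)]`.
The substitution `t = c x^α` turns the `r`-th incomplete moment of `f_c` into
`c^(-r/α) γ(r/α + 1, c z^α)`. Summation and integration may be exchanged because the `i`-th term
has absolute integral at most `θ Γ(r/α + 1) β^(-r/α) |wᵢ| / (i+1)`, and `∑ |C(a,k)| / (k+1)`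
converges for `a > -1`: once `k ≥ a` it telescopes, being `(|C(a,k)| - |C(a,k+1)|) / (a+1)`.
-/

open Real MeasureTheory

/-- Generalized binomial coefficient `C(a,k) = a(a−1)⋯(a−k+1)/k!`. -/
noncomputable def genChoose (a : ℝ) (k : ℕ) : ℝ :=
  (∏ i ∈ Finset.range k, (a - i)) / (Nat.factorial k)

open Set

theorem genChoose_eq_ringChoose (a : ℝ) (k : ℕ) : genChoose a k = Ring.choose a k := by
  rw [Ring.choose_eq_smul, smul_eq_mul, genChoose, ← descPochhammer_eval_eq_prod_range,
    ← Polynomial.aeval_eq_smeval, Polynomial.aeval_def, Polynomial.eval₂_eq_eval_map,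
    descPochhammer_map, div_eq_inv_mul]

theorem hasSum_genChoose_mul_pow (a : ℝ) {y : ℝ} (hy : |y| < 1) :
    HasSum (fun k : ℕ => genChoose a k * y ^ k) ((1 + y) ^ a) := by
  have := (one_add_rpow_hasFPowerSeriesOnBall_zero (a := a)).hasSum (y := y)
    (by simpa [enorm_eq_nnnorm, ← NNReal.coe_lt_coe] using hy)
  simpa [genChoose_eq_ringChoose, binomialSeries, FormalMultilinearSeries.coeff_ofScalars,
    mul_comm] using this

theorem genChoose_succ (a : ℝ) (k : ℕ) :
    genChoose a (k + 1) = genChoose a k * (a - k) / (k + 1) := by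
  simp only [genChoose, Finset.prod_range_succ, Nat.factorial_succ, Nat.cast_mul, Nat.cast_succ]
  field_simp

theorem abs_genChoose_div_succ_eq {a : ℝ} (ha : a ≠ -1) {k : ℕ} (hk : a ≤ k) :
    |genChoose a k| / (k + 1) = (|genChoose a k| - |genChoose a (k + 1)|) / (a + 1) := by
  have hk1 : (0 : ℝ) < k + 1 := by positivity
  have ha1 : a + 1 ≠ 0 := fun h => ha (by linarith)
  rw [genChoose_succ, abs_div, abs_mul, abs_of_nonpos (by linarith : a - k ≤ 0), abs_of_pos hk1]
  field_simp
  ring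

theorem summable_abs_genChoose_div_succ {a : ℝ} (ha : -1 < a) :
    Summable fun k : ℕ => |genChoose a k| / (k + 1) := by
  set N := ⌈a⌉₊
  set d : ℕ → ℝ := fun k => |genChoose a (k + N)|
  have htel : ∀ k : ℕ, |genChoose a (k + N)| / ((k + N : ℕ) + 1) = (d k - d (k + 1)) / (a + 1) :=
    fun k => by
      have hk : a ≤ (k + N : ℕ) := (Nat.le_ceil a).trans (by exact_mod_cast Nat.le_add_left N k)
      rw [abs_genChoose_div_succ_eq ha.ne' hk, add_right_comm]
  rw [← summable_nat_add_iff N]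
  refine summable_of_sum_range_le (c := d 0 / (a + 1)) (fun k => by positivity) fun n => ?_
  rw [Finset.sum_congr rfl fun k _ => htel k, ← Finset.sum_div, Finset.sum_range_sub']
  gcongr
  · linarith
  · exact sub_le_self _ (abs_nonneg _)

theorem integral_Ioc_comp_rpow {E : Type*} [NormedAddCommGroup E] [NormedSpace ℝ E]
    {p z : ℝ} (hp : 0 < p) (hz : 0 ≤ z) (g : ℝ → E) :
    ∫ x in Ioc 0 z, (p * x ^ (p - 1)) • g (x ^ p) = ∫ t in Ioc 0 (z ^ p), g t := by
  have hind : EqOn (fun x => (p * x ^ (p - 1)) • (Ioc 0 (z ^ p)).indicator g (x ^ p))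
      ((Ioc 0 z).indicator fun x => (p * x ^ (p - 1)) • g (x ^ p)) (Ioi 0) := by
    intro x (hx : 0 < x)
    have hmem : x ^ p ∈ Ioc 0 (z ^ p) ↔ x ∈ Ioc 0 z := by
      simp [hx, rpow_pos_of_pos hx, rpow_le_rpow_iff hx.le hz hp]
    by_cases h : x ∈ Ioc 0 z
    · simp [indicator_of_mem h, indicator_of_mem (hmem.2 h)]
    · simp [indicator_of_notMem h, indicator_of_notMem (mt hmem.1 h)]
  have := integral_comp_rpow_Ioi_of_pos (g := (Ioc 0 (z ^ p)).indicator g) hp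
  rwa [setIntegral_congr_fun measurableSet_Ioi hind, integral_indicator measurableSet_Ioc,
    integral_indicator measurableSet_Ioc, Measure.restrict_restrict measurableSet_Ioc,
    Measure.restrict_restrict measurableSet_Ioc, inter_eq_self_of_subset_left Ioc_subset_Ioi_self,
    inter_eq_self_of_subset_left Ioc_subset_Ioi_self] at this

theorem integral_Ioc_comp_mul_left {E : Type*} [NormedAddCommGroup E] [NormedSpace ℝ E]
    {c M : ℝ} (hc : 0 < c) (hM : 0 ≤ M) (g : ℝ → E) :
    ∫ t in Ioc 0 M, g (c * t) = c⁻¹ • ∫ t in Ioc 0 (c * M), g t := by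
  have := intervalIntegral.integral_comp_mul_left g hc.ne' (a := 0) (b := M)
  rwa [mul_zero, intervalIntegral.integral_of_le hM,
    intervalIntegral.integral_of_le (by positivity)] at this

noncomputable def weibullDensity (α c x : ℝ) : ℝ :=
  c * α * x ^ (α - 1) * exp (-(c * x ^ α))

theorem weibullDensity_nonneg {α c x : ℝ} (hα : 0 ≤ α) (hc : 0 ≤ c) (hx : 0 ≤ x) :
    0 ≤ weibullDensity α c x := by
  unfold weibullDensity; positivity

theorem integral_Ioc_rpow_mul_weibullDensity {α c z : ℝ} (hα : 0 < α) (hc : 0 < c)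
    (hz : 0 ≤ z) (q : ℝ) :
    ∫ x in Ioc 0 z, x ^ q * weibullDensity α c x =
      (c ^ (q / α))⁻¹ * ∫ t in Ioc 0 (c * z ^ α), t ^ (q / α) * exp (-t) := by
  set h : ℝ → ℝ := fun t => t ^ (q / α) * exp (-t)
  have hsubst : ∀ x ∈ Ioc (0 : ℝ) z, x ^ q * weibullDensity α c x =
      (α * x ^ (α - 1)) • (c * ((c ^ (q / α))⁻¹ * h (c * x ^ α))) := by
    intro x hx
    have hxq : (c * x ^ α) ^ (q / α) = c ^ (q / α) * x ^ q := by
      rw [mul_rpow hc.le (rpow_nonneg hx.1.le _), ← rpow_mul hx.1.le, mul_div_cancel₀ _ hα.ne']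
    simp only [h, weibullDensity, hxq, smul_eq_mul]
    field_simp
  rw [setIntegral_congr_fun measurableSet_Ioc hsubst,
    integral_Ioc_comp_rpow hα hz (fun y => c * ((c ^ (q / α))⁻¹ * h (c * y))),
    integral_const_mul, integral_const_mul, integral_Ioc_comp_mul_left hc (rpow_nonneg hz _),
    smul_eq_mul]
  field_simp

theorem integrableOn_Ioc_rpow_mul_weibullDensity {α c z q : ℝ} (hα : 0 < α) (hc : 0 ≤ c)
    (hq : 0 ≤ q) :
    IntegrableOn (fun x => x ^ q * weibullDensity α c x) (Ioc 0 z) := by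
  have hmaj : IntegrableOn (fun x => z ^ q * c * α * x ^ (α - 1)) (Ioc 0 z) := by
    rcases le_or_gt z 0 with hz | hz
    · simp [Ioc_eq_empty_of_le hz]
    have := intervalIntegral.intervalIntegrable_rpow' (a := 0) (b := z) (by linarith : -1 < α - 1)
    rw [intervalIntegrable_iff_integrableOn_Ioc_of_le hz.le] at this
    exact this.const_mul _
  refine hmaj.mono' (by unfold weibullDensity; fun_prop) ?_
  filter_upwards [ae_restrict_mem measurableSet_Ioc] with x ⟨hx, hxz⟩
  rw [norm_of_nonneg (mul_nonneg (rpow_nonneg hx.le _) (weibullDensity_nonneg hα.le hc hx.le))]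
  have hexp : exp (-(c * x ^ α)) ≤ 1 := exp_le_one_iff.2 (neg_nonpos.2 (by positivity))
  have hzq : 0 ≤ z ^ q := rpow_nonneg (hx.le.trans hxz) q
  calc x ^ q * weibullDensity α c x ≤ z ^ q * (c * α * x ^ (α - 1) * 1) := by
        unfold weibullDensity
        gcongr
    _ = z ^ q * c * α * x ^ (α - 1) := by ring

theorem integral_Ioc_rpow_mul_exp_neg_le_Gamma {q : ℝ} (hq : -1 < q) (M : ℝ) :
    ∫ t in Ioc 0 M, t ^ q * exp (-t) ≤ Gamma (q + 1) := by
  have hint := GammaIntegral_convergent (s := q + 1) (by linarith)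
  rw [add_sub_cancel_right] at hint
  rw [Gamma_eq_integral (by linarith), add_sub_cancel_right]
  simp_rw [mul_comm _ (exp _)]
  refine setIntegral_mono_set hint ?_ Ioc_subset_Ioi_self.eventuallyLE
  filter_upwards [ae_restrict_mem measurableSet_Ioi] with t (ht : 0 < t)
  positivity

theorem integral_Ioc_rpow_mul_weibullDensity_le {α c z q : ℝ} (hα : 0 < α) (hc : 0 < c)
    (hz : 0 ≤ z) (hq : -α < q) :
    ∫ x in Ioc 0 z, x ^ q * weibullDensity α c x ≤ Gamma (q / α + 1) / c ^ (q / α) := by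
  rw [integral_Ioc_rpow_mul_weibullDensity hα hc hz, inv_mul_eq_div]
  gcongr
  refine integral_Ioc_rpow_mul_exp_neg_le_Gamma ?_ _
  rwa [lt_div_iff₀ hα, neg_one_mul]

noncomputable def gtwDensity (α β θ lam x : ℝ) : ℝ :=
  θ * α * β * x ^ (α - 1) * exp (-β * x ^ α) * (1 - exp (-β * x ^ α)) ^ (θ - 1) *
    (1 + lam - 2 * lam * (1 - exp (-β * x ^ α)) ^ θ)

noncomputable def gtwCoeff (θ lam : ℝ) (i : ℕ) : ℝ :=
  (-1) ^ i * ((1 + lam) * genChoose (θ - 1) i - 2 * lam * genChoose (2 * θ - 1) i)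

theorem hasSum_gtwCoeff_mul_pow_succ (θ lam : ℝ) {u : ℝ} (hu0 : 0 ≤ u) (hu1 : u < 1) :
    HasSum (fun i : ℕ => gtwCoeff θ lam i * u ^ (i + 1))
      (u * (1 - u) ^ (θ - 1) * (1 + lam - 2 * lam * (1 - u) ^ θ)) := by
  have hu : |-u| < 1 := by rwa [abs_neg, abs_of_nonneg hu0]
  have hsplit : (1 - u) ^ (2 * θ - 1) = (1 - u) ^ (θ - 1) * (1 - u) ^ θ := by
    rw [← rpow_add (by linarith)]; ring_nf
  have h := (((hasSum_genChoose_mul_pow (θ - 1) hu).mul_left (1 + lam)).sub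
    ((hasSum_genChoose_mul_pow (2 * θ - 1) hu).mul_left (2 * lam))).mul_left u
  rw [← sub_eq_add_neg, hsplit] at h
  rw [show u * (1 - u) ^ (θ - 1) * (1 + lam - 2 * lam * (1 - u) ^ θ) =
    u * ((1 + lam) * (1 - u) ^ (θ - 1) - 2 * lam * ((1 - u) ^ (θ - 1) * (1 - u) ^ θ)) by ring]
  exact h.congr_fun fun i => by simp only [gtwCoeff, neg_pow u, pow_succ]; ring

theorem hasSum_gtwDensity {α β θ lam x : ℝ} (hβ : 0 < β) (hx : 0 < x) :
    HasSum (fun i : ℕ => θ / (i + 1) * gtwCoeff θ lam i * weibullDensity α ((i + 1) * β) x)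
      (gtwDensity α β θ lam x) := by
  set u := exp (-β * x ^ α)
  have hu1 : u < 1 := exp_lt_one_iff.2 (by nlinarith [rpow_pos_of_pos hx α])
  have h := (hasSum_gtwCoeff_mul_pow_succ θ lam (exp_pos _).le hu1).mul_left
    (θ * α * β * x ^ (α - 1))
  rw [show θ * α * β * x ^ (α - 1) *
      (u * (1 - u) ^ (θ - 1) * (1 + lam - 2 * lam * (1 - u) ^ θ)) = gtwDensity α β θ lam x by
    simp only [gtwDensity, u]; ring] at h
  refine h.congr_fun fun i => ?_
  have hui : exp (-((i + 1) * β * x ^ α)) = u ^ (i + 1) := by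
    rw [← exp_nat_mul]; push_cast; ring_nf
  simp only [weibullDensity, hui, u, neg_mul]
  field_simp

theorem summable_abs_gtwCoeff_div_succ {θ : ℝ} (hθ : 0 < θ) (lam : ℝ) :
    Summable fun i : ℕ => |gtwCoeff θ lam i| / (i + 1) := by
  refine Summable.of_nonneg_of_le (fun i => by positivity) (fun i => ?_)
    (((summable_abs_genChoose_div_succ (a := θ - 1) (by linarith)).mul_left |1 + lam|).add
      ((summable_abs_genChoose_div_succ (a := 2 * θ - 1) (by linarith)).mul_left |2 * lam|))
  rw [mul_div_assoc', mul_div_assoc', ← add_div]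
  gcongr
  rw [gtwCoeff, abs_mul, abs_pow, abs_neg, abs_one, one_pow, one_mul, ← abs_mul, ← abs_mul]
  exact abs_sub _ _

theorem summable_integral_norm_gtw_components {α β θ z q : ℝ} (hα : 0 < α) (hβ : 0 < β)
    (hθ : 0 < θ) (hz : 0 ≤ z) (hq : 0 ≤ q) (lam : ℝ) :
    Summable fun i : ℕ => ∫ x in Ioc 0 z,
      ‖θ / (i + 1) * gtwCoeff θ lam i * (x ^ q * weibullDensity α ((i + 1) * β) x)‖ := by
  refine Summable.of_nonneg_of_le (fun i => integral_nonneg fun _ => norm_nonneg _) (fun i => ?_)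
    ((summable_abs_gtwCoeff_div_succ hθ lam).mul_left (θ * Gamma (q / α + 1) / β ^ (q / α)))
  have hc : 0 < ((i : ℝ) + 1) * β := by positivity
  have hΓ : 0 ≤ Gamma (q / α + 1) := (Gamma_pos_of_pos (by positivity)).le
  calc ∫ x in Ioc 0 z, ‖θ / (i + 1) * gtwCoeff θ lam i *
          (x ^ q * weibullDensity α ((i + 1) * β) x)‖
      = θ / (i + 1) * |gtwCoeff θ lam i| *
          ∫ x in Ioc 0 z, x ^ q * weibullDensity α ((i + 1) * β) x := by
        rw [← integral_const_mul]
        refine setIntegral_congr_fun measurableSet_Ioc fun x hx => ?_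
        rw [norm_mul, norm_mul, norm_of_nonneg (by positivity : 0 ≤ θ / ((i : ℝ) + 1)),
          norm_of_nonneg (mul_nonneg (rpow_nonneg hx.1.le _)
            (weibullDensity_nonneg hα.le hc.le hx.1.le)), Real.norm_eq_abs]
    _ ≤ θ / (i + 1) * |gtwCoeff θ lam i| * (Gamma (q / α + 1) / ((i + 1) * β) ^ (q / α)) := by
        gcongr
        exact integral_Ioc_rpow_mul_weibullDensity_le hα hc hz (by linarith)
    _ ≤ θ / (i + 1) * |gtwCoeff θ lam i| * (Gamma (q / α + 1) / β ^ (q / α)) := by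
        gcongr
        exact le_mul_of_one_le_left hβ.le (by simp)
    _ = θ * Gamma (q / α + 1) / β ^ (q / α) * (|gtwCoeff θ lam i| / (i + 1)) := by ring

theorem gtw_incomplete_moment_general (α β θ lam z : ℝ) (r : ℕ)
    (hα : 0 < α) (hβ : 0 < β) (hθ : 0 < θ) (hz : 0 < z) :
    ∫ x in Set.Ioc (0 : ℝ) z,
        x ^ r *
          (θ * α * β * x ^ (α - 1) * Real.exp (-β * x ^ α) *
            (1 - Real.exp (-β * x ^ α)) ^ (θ - 1) *
            (1 + lam - 2 * lam * (1 - Real.exp (-β * x ^ α)) ^ θ)) =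
      ∑' i : ℕ,
        (-1 : ℝ) ^ i *
          ((1 + lam) * genChoose (θ - 1) i - 2 * lam * genChoose (2 * θ - 1) i) *
          (θ / (β ^ ((r : ℝ) / α) * ((i : ℝ) + 1) ^ ((r : ℝ) / α + 1))) *
          ∫ t in Set.Ioc (0 : ℝ) (((i : ℝ) + 1) * β * z ^ α),
            t ^ ((r : ℝ) / α) * Real.exp (-t) := by
  set F : ℕ → ℝ → ℝ := fun i x =>
    θ / (i + 1) * gtwCoeff θ lam i * (x ^ (r : ℝ) * weibullDensity α ((i + 1) * β) x)
  have hc (i : ℕ) : 0 < ((i : ℝ) + 1) * β := by positivity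
  have hF_int (i : ℕ) : IntegrableOn (F i) (Ioc 0 z) :=
    (integrableOn_Ioc_rpow_mul_weibullDensity hα (hc i).le r.cast_nonneg).const_mul _
  have hF_tsum : ∀ x ∈ Ioc 0 z, x ^ r * gtwDensity α β θ lam x = ∑' i, F i x := fun x hx =>
    (((hasSum_gtwDensity hβ hx.1).mul_left (x ^ r)).congr_fun fun i => by
      simp only [F, rpow_natCast]; ring).tsum_eq.symm
  change ∫ x in Ioc 0 z, x ^ r * gtwDensity α β θ lam x = _
  rw [setIntegral_congr_fun measurableSet_Ioc hF_tsum, ← integral_tsum_of_summable_integral_norm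
    hF_int (summable_integral_norm_gtw_components hα hβ hθ hz.le r.cast_nonneg lam)]
  refine tsum_congr fun i => ?_
  rw [integral_const_mul, integral_Ioc_rpow_mul_weibullDensity hα (hc i) hz.le,
    mul_rpow (by positivity) hβ.le, rpow_add_one (by positivity)]
  simp only [gtwCoeff]
  field_simp

/-- The `r`-th incomplete moment of the generalized transmuted Weibull distribution:
`∫₀^z x^r f(x) dx = Σ_{i=0}^∞ (−1)^i [(1+λ)C(θ−1,i) − 2λC(2θ−1,i)]
  (θ/(β^{r/α}(i+1)^{r/α+1})) γ(r/α + 1, (i+1)βz^α)`. -/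
theorem gtw_incomplete_moment (α β θ lam z : ℝ) (r : ℕ)
    (hα : 0 < α) (hβ : 0 < β) (hθ : 0 < θ)
    (hlam : lam ∈ Set.Icc (-1 : ℝ) 1) (hz : 0 < z) :
    ∫ x in Set.Ioc (0 : ℝ) z,
        x ^ r *
          (θ * α * β * x ^ (α - 1) * Real.exp (-β * x ^ α) *
            (1 - Real.exp (-β * x ^ α)) ^ (θ - 1) *
            (1 + lam - 2 * lam * (1 - Real.exp (-β * x ^ α)) ^ θ)) =
      ∑' i : ℕ,
        (-1 : ℝ) ^ i *
          ((1 + lam) * genChoose (θ - 1) i - 2 * lam * genChoose (2 * θ - 1) i) *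
          (θ / (β ^ ((r : ℝ) / α) * ((i : ℝ) + 1) ^ ((r : ℝ) / α + 1))) *
          ∫ t in Set.Ioc (0 : ℝ) (((i : ℝ) + 1) * β * z ^ α),
            t ^ ((r : ℝ) / α) * Real.exp (-t) :=
  gtw_incomplete_moment_general α β θ lam z r hα hβ hθ hz
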